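/- arXiv:2301.04789 — 2 statements merged into one kernel-verified Lean document; each statement's English description precedes it below -/
import Mathlib

section
/- Chaitin's incompleteness theorem (abstract form): Let T be a function from binary strings to Prop representing provability of 'x is random', such that the set {x : T x} is computably enumerable and sound, i.e., T x implies C(x) ≥ |x|/2, where C is plain Kolmogorov complexity relative to a fixed universal machine. Then there exists a constant k such that for all x with |x| > k, ¬ T x. -/
/-!
If `T` held for arbitrarily long strings, then the machine that, on input `p`, enumerates `T`
until it meets some `x` with `|x| ≥ 4 |p|` and outputs it would describe such strings by
programs of length `|p|`. Universality turns these into `U`-programs of length `|p| + d`, and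
for `|p| = d` this is at most half the length of the string found, contradicting soundness.
-/

open Encodable Nat.Partrec

variable {α β γ : Type*} [Primcodable α] [Primcodable β] [Primcodable γ]

theorem Partrec.exists_computable_stage {f : α →. β} (hf : Partrec f) :
    ∃ S : α → ℕ → Bool, Computable₂ S ∧ ∀ a, (f a).Dom ↔ ∃ s, S a s = true := by
  obtain ⟨c, hc⟩ := Code.exists_code.1 hf
  refine ⟨fun a s => (Code.evaln s c (encode a)).isSome, ?_, fun a => ?_⟩
  · exact (Primrec.option_isSome.comp (Code.primrec_evaln.comp
      ((Primrec.snd.pair (Primrec.const c)).pair (Primrec.encode.comp Primrec.fst)))).to_comp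
  · have hdom : (f a).Dom ↔ (Code.eval c (encode a)).Dom := by simp [hc, encodek]
    rw [hdom, Part.dom_iff_mem]
    simp only [Code.evaln_complete, Option.isSome_iff_exists, Option.mem_def]
    exact exists_comm

theorem Computable₂.exists_partrec_witness {R : α → γ → Bool} (hR : Computable₂ R) :
    ∃ g : α →. γ, Partrec g ∧
      ∀ a, (∀ c ∈ g a, R a c = true) ∧ ((∃ c, R a c = true) → (g a).Dom) := by
  refine ⟨fun a => Nat.rfindOpt fun n =>
      (decode (α := γ) n).bind fun c => bif R a c then some c else none,
    ?_, fun a => ⟨?_, ?_⟩⟩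
  · refine Partrec.rfindOpt (Computable.option_bind (Computable.decode.comp Computable.snd) ?_)
    exact Computable.cond (hR.comp (Computable.fst.comp Computable.fst) Computable.snd)
      (Computable.option_some.comp Computable.snd) (Computable.const none)
  · intro c hc
    obtain ⟨n, hn⟩ := Nat.rfindOpt_spec hc
    obtain ⟨c', -, hc'⟩ := Option.mem_bind_iff.1 hn
    cases h : R a c' <;> simp_all
  · rintro ⟨c, hc⟩
    exact Nat.rfindOpt_dom.2 ⟨encode c, c, by simp [encodek, hc]⟩

theorem Partrec.exists_search_dom {f : α →. β} (hf : Partrec f) {P : γ → α → Bool}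
    (hP : Computable₂ P) :
    ∃ g : γ →. α, Partrec g ∧
      ∀ c, (∀ x ∈ g c, P c x = true ∧ (f x).Dom) ∧
        ((∃ x, P c x = true ∧ (f x).Dom) → (g c).Dom) := by
  obtain ⟨S, hS, hfS⟩ := hf.exists_computable_stage
  have hR : Computable₂ fun (c : γ) (xs : α × ℕ) => P c xs.1 && S xs.1 xs.2 :=
    Primrec.and.to_comp.comp₂ (hP.comp Computable.fst (Computable.fst.comp Computable.snd))
      (hS.comp (Computable.fst.comp Computable.snd) (Computable.snd.comp Computable.snd))
  obtain ⟨g, hg, hgR⟩ := hR.exists_partrec_witness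
  refine ⟨fun c => (g c).map Prod.fst, hg.map (Computable.fst.comp Computable.snd).to₂,
    fun c => ⟨?_, ?_⟩⟩
  · intro x hx
    obtain ⟨⟨y, s⟩, hys, rfl⟩ := Part.mem_map_iff _ |>.1 hx
    obtain ⟨hPy, hSy⟩ := Bool.and_eq_true_iff.1 ((hgR c).1 _ hys)
    exact ⟨hPy, (hfS y).2 ⟨s, hSy⟩⟩
  · rintro ⟨x, hPx, hfx⟩
    obtain ⟨s, hs⟩ := (hfS x).1 hfx
    exact (hgR c).2 ⟨(x, s), by simp [hPx, hs]⟩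

theorem stmt_3_general (U : List Bool →. List Bool)
    (hUniv : ∀ f : List Bool →. List Bool, Partrec f →
      ∃ d : ℕ, ∀ p x : List Bool, f p = Part.some x →
        ∃ q : List Bool, q.length ≤ p.length + d ∧ U q = Part.some x)
    (T : List Bool → Prop)
    (hce : ∃ f : List Bool →. Unit, Partrec f ∧ ∀ x, T x ↔ (f x).Dom)
    (hsound : ∀ x, T x → ∀ p : List Bool, 2 * p.length ≤ x.length → U p ≠ Part.some x) :
    ∃ k : ℕ, ∀ x : List Bool, x.length > k → ¬ T x := by
  obtain ⟨f, hf, hT⟩ := hce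
  have hlong : Computable₂ fun p x : List Bool => decide (4 * p.length ≤ x.length) :=
    (Primrec.nat_le.comp (Primrec.nat_mul.comp (Primrec.const 4)
      (Primrec.list_length.comp Primrec.fst)) (Primrec.list_length.comp Primrec.snd)).decide.to_comp
  obtain ⟨g, hg, hgspec⟩ := hf.exists_search_dom hlong
  obtain ⟨d, hd⟩ := hUniv g hg
  refine ⟨4 * d, fun x hx hTx => ?_⟩
  set p := List.replicate d true
  obtain ⟨y, hy⟩ := Part.dom_iff_mem.1 ((hgspec p).2 ⟨x, by simp [p]; omega, (hT x).1 hTx⟩)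
  obtain ⟨hylong, hfy⟩ := (hgspec p).1 y hy
  obtain ⟨q, hq, hUq⟩ := hd p y (Part.eq_some_iff.2 hy)
  simp only [p, decide_eq_true_eq, List.length_replicate] at hylong hq
  exact hsound y ((hT y).2 hfy) q (by omega) hUq

/-- Chaitin's incompleteness theorem (abstract form): if `U` is a universal partial
computable machine, and `T` is a c.e. predicate ("`x` is provably random") that is
sound, i.e. `T x` implies `C(x) ≥ |x|/2` (no program of length `≤ |x|/2` outputs `x`),
then there is a constant `k` such that `¬ T x` for all `x` with `|x| > k`. -/
theorem stmt_3 (U : List Bool →. List Bool) (hU : Partrec U)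
    (hUniv : ∀ f : List Bool →. List Bool, Partrec f →
      ∃ d : ℕ, ∀ p x : List Bool, f p = Part.some x →
        ∃ q : List Bool, q.length ≤ p.length + d ∧ U q = Part.some x)
    (T : List Bool → Prop)
    (hce : ∃ f : List Bool →. Unit, Partrec f ∧ ∀ x, T x ↔ (f x).Dom)
    (hsound : ∀ x, T x → ∀ p : List Bool, 2 * p.length ≤ x.length → U p ≠ Part.some x) :
    ∃ k : ℕ, ∀ x : List Bool, x.length > k → ¬ T x :=
  stmt_3_general U hUniv T hce hsound
end

section
/- If a computably enumerable set W is a subset of the set R of Kolmogorov random strings (strings incompressible by half), then W is finite. That is, R is immune. -/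
/-!
Chaitin's argument. If `W ⊆ R` were infinite, a machine could, on input `p`, enumerate `W` until
it finds some `x` with `|x| ≥ 4|p|`. By universality `U` reproduces this output from a program of
length at most `|p| + d`; taking `|p| = d` gives a description of `x` of length at most
`2d ≤ |x|/2`, contradicting `x ∈ R`.
-/

open Nat.Partrec (Code)

theorem Partrec.exists_primrec₂_dom_iff {α σ : Type*} [Primcodable α] [Primcodable σ]
    {f : α →. σ} (hf : Partrec f) :
    ∃ s : α → ℕ → Bool, Primrec₂ s ∧ ∀ a, (f a).Dom ↔ ∃ k, s a k = true := by
  obtain ⟨c, hc⟩ := Code.exists_code.1 hf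
  refine ⟨fun a k => (Code.evaln k c (Encodable.encode a)).isSome,
    Primrec.option_isSome.comp <| Code.primrec_evaln.comp <|
      (Primrec.snd.pair (Primrec.const c)).pair (Primrec.encode.comp Primrec.fst), fun a => ?_⟩
  have hdom : (f a).Dom ↔ (c.eval (Encodable.encode a)).Dom := by
    simp [hc, Encodable.encodek]
  rw [hdom, Part.dom_iff_mem]
  simp only [Code.evaln_complete, Option.isSome_iff_exists, Option.mem_def]
  exact exists_comm

theorem Partrec.exists_partrec_find_dom {α β σ : Type*} [Primcodable α] [Primcodable β]
    [Primcodable σ] {f : α →. σ} (hf : Partrec f) {r : β → α → Prop} (hr : PrimrecRel r) :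
    ∃ g : β →. α, Partrec g ∧ ∀ b,
      (∀ a ∈ g b, (f a).Dom ∧ r b a) ∧ ((∃ a, (f a).Dom ∧ r b a) → (g b).Dom) := by
  classical
  obtain ⟨s, hs, hsf⟩ := hf.exists_primrec₂_dom_iff
  -- Dovetailing: stage `n` decodes a pair `(a, k)` and accepts `a` if `f a` halts within `k` steps.
  let step (b : β) (n : ℕ) : Option α :=
    (Encodable.decode (α := α × ℕ) n).bind fun ak =>
      bif s ak.1 ak.2 && decide (r b ak.1) then some ak.1 else Option.none
  have hstep : Computable₂ step := by
    refine Primrec₂.to_comp <| Primrec.option_bind (Primrec.decode.comp Primrec.snd) ?_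
    refine Primrec.cond ?_ (Primrec.option_some.comp (Primrec.fst.comp Primrec.snd))
      (Primrec.const Option.none)
    exact Primrec.and.comp (hs.comp (Primrec.fst.comp Primrec.snd) (Primrec.snd.comp Primrec.snd))
      (hr.decide.comp (Primrec.fst.comp Primrec.fst) (Primrec.fst.comp Primrec.snd))
  have mem_step : ∀ b a n, a ∈ step b n ↔
      ∃ k, Encodable.decode n = some (a, k) ∧ s a k = true ∧ r b a := by
    intro b a n
    simp only [step, Option.mem_def, Option.bind_eq_some_iff, Prod.exists]
    constructor
    · rintro ⟨a', k, hn, h⟩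
      cases hc : (s a' k && decide (r b a'))
      · simp [hc] at h
      · rw [hc, cond_true, Option.some.injEq] at h
        subst h
        simp only [Bool.and_eq_true, decide_eq_true_eq] at hc
        exact ⟨k, hn, hc⟩
    · rintro ⟨k, hn, hsk, hra⟩
      exact ⟨a, k, hn, by simp [hsk, hra]⟩
  refine ⟨fun b => Nat.rfindOpt (step b), Partrec.rfindOpt hstep, fun b => ⟨?_, ?_⟩⟩
  · intro a ha
    obtain ⟨n, hn⟩ := Nat.rfindOpt_spec ha
    obtain ⟨k, -, hsk, hra⟩ := (mem_step b a n).1 hn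
    exact ⟨(hsf a).2 ⟨k, hsk⟩, hra⟩
  · rintro ⟨a, hfa, hra⟩
    obtain ⟨k, hsk⟩ := (hsf a).1 hfa
    exact Nat.rfindOpt_dom.2
      ⟨Encodable.encode (a, k), a, (mem_step b a _).2 ⟨k, Encodable.encodek _, hsk, hra⟩⟩

theorem exists_compressible_of_partrec_long_outputs (U : List Bool →. List Bool)
    (hUniv : ∀ f : List Bool →. List Bool, Partrec f →
      ∃ d : ℕ, ∀ p x : List Bool, f p = Part.some x →
        ∃ q : List Bool, q.length ≤ p.length + d ∧ U q = Part.some x)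
    {g : List Bool →. List Bool} (hg : Partrec g)
    (hlong : ∀ p, ∃ x ∈ g p, 4 * p.length ≤ x.length) :
    ∃ p, ∃ x ∈ g p, ∃ q : List Bool, 2 * q.length ≤ x.length ∧ U q = Part.some x := by
  obtain ⟨d, hd⟩ := hUniv g hg
  obtain ⟨x, hx, hxlen⟩ := hlong (List.replicate d false)
  obtain ⟨q, hqlen, hqU⟩ := hd _ x (Part.eq_some_iff.2 hx)
  rw [List.length_replicate] at hxlen hqlen
  exact ⟨_, x, hx, q, by omega, hqU⟩

theorem stmt_4_general (U : List Bool →. List Bool)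
    (hUniv : ∀ f : List Bool →. List Bool, Partrec f →
      ∃ d : ℕ, ∀ p x : List Bool, f p = Part.some x →
        ∃ q : List Bool, q.length ≤ p.length + d ∧ U q = Part.some x)
    (W : Set (List Bool))
    (hce : ∃ f : List Bool →. Unit, Partrec f ∧ ∀ x, x ∈ W ↔ (f x).Dom)
    (hsub : W ⊆ {x : List Bool |
      ∀ p : List Bool, 2 * p.length ≤ x.length → U p ≠ Part.some x}) :
    W.Finite := by
  obtain ⟨f, hf, hfW⟩ := hce
  have hlength : PrimrecRel fun (p x : List Bool) => 4 * p.length ≤ x.length :=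
    Primrec.nat_le.comp (Primrec.nat_mul.comp (Primrec.const 4)
      (Primrec.list_length.comp Primrec.fst)) (Primrec.list_length.comp Primrec.snd)
  obtain ⟨g, hg, hgspec⟩ := hf.exists_partrec_find_dom hlength
  by_contra hinf
  have hlong : ∀ p, ∃ x ∈ g p, 4 * p.length ≤ x.length := by
    intro p
    obtain ⟨x, hxW, hxlen⟩ :=
      Set.Infinite.exists_notMem_finite hinf (List.finite_length_lt Bool (4 * p.length))
    have hdom := (hgspec p).2 ⟨x, (hfW x).1 hxW, not_lt.1 hxlen⟩
    exact ⟨_, Part.get_mem hdom, ((hgspec p).1 _ (Part.get_mem hdom)).2⟩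
  obtain ⟨p, x, hx, q, hq, hqU⟩ := exists_compressible_of_partrec_long_outputs U hUniv hg hlong
  exact hsub ((hfW x).2 ((hgspec p).1 x hx).1) q hq hqU

/-- Immunity of `R` (key half): if `U` is a universal partial computable machine and
`W` is a c.e. set of strings contained in `R = {x : C(x) ≥ |x|/2}`, then `W` is finite. -/
theorem stmt_4 (U : List Bool →. List Bool) (hU : Partrec U)
    (hUniv : ∀ f : List Bool →. List Bool, Partrec f →
      ∃ d : ℕ, ∀ p x : List Bool, f p = Part.some x →
        ∃ q : List Bool, q.length ≤ p.length + d ∧ U q = Part.some x)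
    (W : Set (List Bool))
    (hce : ∃ f : List Bool →. Unit, Partrec f ∧ ∀ x, x ∈ W ↔ (f x).Dom)
    (hsub : W ⊆ {x : List Bool |
      ∀ p : List Bool, 2 * p.length ≤ x.length → U p ≠ Part.some x}) :
    W.Finite :=
  stmt_4_general U hUniv W hce hsub
end
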